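/- Let λ be an infinite limit ordinal and α := ω^λ. Every composition ∘ on 𝕃_{<α} that admits Taylor expansion obeys the Chain Rule: (f∘g)' = (f'∘g)·g' for all f ∈ 𝕃_{<α} and g ∈ 𝕃_{<α}^{>ℝ}. -/

import Mathlib

noncomputable section

open Classical

namespace LogHyp

universe u v w

/-- A subset of a totally ordered set is *well-based* if it contains no infinite
strictly increasing sequence. -/
def WellBased {M : Type u} [Preorder M] (S : Set M) : Prop :=
  ¬ ∃ f : ℕ → M, StrictMono f ∧ ∀ n, f n ∈ S

theorem wellBased_isPWO {M : Type u} [LinearOrder M] {S : Set Mᵒᵈ}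
    (h : WellBased (OrderDual.toDual ⁻¹' S)) : S.IsPWO := by
  rw [Set.isPWO_iff_isWF, Set.isWF_iff_no_descending_seq]
  intro f hf hmem
  exact h ⟨fun n => OrderDual.ofDual (f n), fun a b hab => hf hab, hmem⟩

/-- A family in a field of well-based series (series with monomials in `Mᵒᵈ`,
so that supports are well-based as subsets of `M`) is summable if the union of
the supports is well-based and each monomial lies in the support of only
finitely many members. -/
def IsSummable {M : Type u} [LinearOrder M] {R : Type v} [Zero R] {ι : Type w}
    (f : ι → HahnSeries Mᵒᵈ R) : Prop :=
  WellBased (OrderDual.toDual ⁻¹' (⋃ i, (f i).support)) ∧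
    ∀ g : Mᵒᵈ, {i | (f i).coeff g ≠ 0}.Finite

/-- The sum of a summable family (junk value `0` if the family is not summable). -/
noncomputable def famSum {M : Type u} [LinearOrder M] {R : Type v} [AddCommMonoid R] {ι : Type w}
    (f : ι → HahnSeries Mᵒᵈ R) : HahnSeries Mᵒᵈ R :=
  if h : IsSummable f then
    (⟨f, wellBased_isPWO h.1, h.2⟩ : HahnSeries.SummableFamily Mᵒᵈ R ι).hsum
  else 0

/-- Strongly `k`-linear maps between fields of well-based series:
`k`-linear maps sending summable families to summable families, preserving sums. -/
def IsStronglyLinear {k : Type v} [Semiring k] {M : Type u} {N : Type w}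
    [LinearOrder M] [LinearOrder N]
    (Φ : HahnSeries Mᵒᵈ k → HahnSeries Nᵒᵈ k) : Prop :=
  (∀ (c : k) (f : HahnSeries Mᵒᵈ k), Φ (c • f) = c • Φ f) ∧
  (∀ f g, Φ (f + g) = Φ f + Φ g) ∧
  ∀ {ι : Type u} (f : ι → HahnSeries Mᵒᵈ k), IsSummable f →
    IsSummable (fun i => Φ (f i)) ∧ Φ (famSum f) = famSum fun i => Φ (f i)

/-- `f ≺ g`: the dominant monomial of `f` is smaller than that of `g`
(with `𝔡 0` below all monomials). -/
def prec {M : Type u} [LinearOrder M] {R : Type v} [Zero R]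
    (f g : HahnSeries Mᵒᵈ R) : Prop :=
  g ≠ 0 ∧ ∀ m ∈ f.support, ∃ n ∈ g.support,
    (OrderDual.ofDual m : M) < OrderDual.ofDual n

/-- `f ⪯ g`: the dominant monomial of `f` is at most that of `g`. -/
def preceq {M : Type u} [LinearOrder M] {R : Type v} [Zero R]
    (f g : HahnSeries Mᵒᵈ R) : Prop :=
  ∀ m ∈ f.support, ∃ n ∈ g.support, (OrderDual.ofDual m : M) ≤ OrderDual.ofDual n

/-- The coefficient of the dominant (i.e. maximal) monomial of `f` (0 for `f = 0`). -/
noncomputable def leadCoeff {M : Type u} [LinearOrder M] {k : Type v} [Zero k]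
    (f : HahnSeries Mᵒᵈ k) : k :=
  if hf : f = 0 then 0
  else f.coeff (f.isWF_support.min (HahnSeries.support_nonempty_iff.mpr hf))

/-- `f > 0` for real well-based series: the leading coefficient is positive. -/
def SPos {M : Type u} [LinearOrder M] (f : HahnSeries Mᵒᵈ ℝ) : Prop := 0 < leadCoeff f

/-- The ordering of real well-based series: `f < g` iff `g - f` has positive
leading coefficient. -/
def SLt {M : Type u} [LinearOrder M] (f g : HahnSeries Mᵒᵈ ℝ) : Prop := SPos (g - f)

/-- `f > ℝ` : `f` exceeds every real constant. -/
def gtR {M : Type u} [AddCommGroup M] [LinearOrder M] [IsOrderedAddMonoid M] (f : HahnSeries Mᵒᵈ ℝ) : Prop :=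
  ∀ r : ℝ, SLt (HahnSeries.C r) f

/-- `log(1+ε) = ∑_{n≥1} (-1)^{n-1} ε^n / n`, for `ε ≺ 1`. -/
noncomputable def log1p {M : Type u} [AddCommGroup M] [LinearOrder M] [IsOrderedAddMonoid M] {k : Type v} [Field k]
    (ε : HahnSeries Mᵒᵈ k) : HahnSeries Mᵒᵈ k :=
  famSum fun n : ℕ => ((-1 : k) ^ n / ((n : k) + 1)) • ε ^ (n + 1)

/-- `exp(ε) = ∑_{n≥0} ε^n / n!`, for `ε ≺ 1`. -/
noncomputable def expS {M : Type u} [AddCommGroup M] [LinearOrder M] [IsOrderedAddMonoid M] {k : Type v} [Field k]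
    (f : HahnSeries Mᵒᵈ k) : HahnSeries Mᵒᵈ k :=
  famSum fun n : ℕ => ((n.factorial : k))⁻¹ • f ^ n

/-- The operator support of a linear operator: the smallest set `𝔖` of monomials with
`supp S(m) ⊆ 𝔖·m` for all monomials `m`. -/
def opSupport {M : Type u} [AddCommGroup M] [LinearOrder M] [IsOrderedAddMonoid M] {k : Type v} [Zero k] [One k]
    (S : HahnSeries Mᵒᵈ k → HahnSeries Mᵒᵈ k) : Set Mᵒᵈ :=
  ⋃ m : Mᵒᵈ, (fun g => g - m) '' (S (HahnSeries.single m 1)).support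



/-- The ordinals below `α`. -/
abbrev Idx (α : Ordinal.{0}) : Type 1 := {β : Ordinal.{0} // β < α}

/-- The monomial group `𝔏_{<α}`, written additively: a logarithmic hypermonomial
`ℓ^r = ∏_{β<α} ℓ_β^{r_β}` is identified with its exponent sequence `r`, and the
group is ordered lexicographically. -/
abbrev Mon (α : Ordinal.{0}) : Type 1 := Lex (Idx α → ℝ)

/-- The field `𝕃_{<α} = ℝ[[𝔏_{<α}]]` of logarithmic hyperseries: well-based series
with real coefficients and monomials in `𝔏_{<α}` (we use the order dual so that
supports are well-based, i.e. reverse well-ordered, subsets of `𝔏_{<α}`). -/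
abbrev LSeries (α : Ordinal.{0}) : Type 1 := HahnSeries (Mon α)ᵒᵈ ℝ

/-- The monomial `ℓ^r` as an element of the (dualised) monomial group. -/
def monExp (α : Ordinal.{0}) (r : Idx α → ℝ) : (Mon α)ᵒᵈ := OrderDual.toDual (toLex r)

/-- The monomial `ℓ^r` as an element of `𝕃_{<α}`. -/
noncomputable def monS (α : Ordinal.{0}) (r : Idx α → ℝ) : LSeries α :=
  HahnSeries.single (monExp α r) 1

/-- The exponent sequence of the hyperlogarithm `ℓ_β`. -/
def ellExp (α β : Ordinal.{0}) : Idx α → ℝ := fun ρ => if ρ.1 = β then 1 else 0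

/-- The hyperlogarithm `ℓ_β` as an element of `𝕃_{<α}` (for `β < α`). -/
noncomputable def ell (α β : Ordinal.{0}) : LSeries α := monS α (ellExp α β)

/-- The exponent sequence of `ℓ_β' = ∏_{ρ<β} ℓ_ρ⁻¹`. -/
def derExp (α β : Ordinal.{0}) : Idx α → ℝ := fun ρ => if ρ.1 < β then -1 else 0

/-- The exponent sequence of `ℓ_β† = ∏_{ρ≤β} ℓ_ρ⁻¹`. -/
def dagExp (α β : Ordinal.{0}) : Idx α → ℝ := fun ρ => if ρ.1 ≤ β then -1 else 0

/-- `D` is *the* derivation of `𝕃_{<α}`: a strongly `ℝ`-linear derivation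
with `D ℓ_β = ∏_{ρ<β} ℓ_ρ⁻¹` for all `β < α`. -/
def IsDerL (α : Ordinal.{0}) (D : LSeries α → LSeries α) : Prop :=
  IsStronglyLinear D ∧ (∀ f g, D (f * g) = f * D g + g * D f) ∧
    ∀ β : Ordinal.{0}, β < α → D (ell α β) = monS α (derExp α β)

/-- The exponent sequence of the dominant monomial of `f` (0 if `f = 0`). -/
noncomputable def domExp (α : Ordinal.{0}) (f : LSeries α) : Idx α → ℝ :=
  if hf : f = 0 then 0
  else ofLex (OrderDual.ofDual
    (f.isWF_support.min (HahnSeries.support_nonempty_iff.mpr hf)))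

/-- The logarithm on `𝕃_{<α}^{>0}` (`α` a limit ordinal):
`log (c·ℓ^r·(1+ε)) = ∑_β r_β ℓ_{β+1} + log c + ∑_{n≥1} (-1)^{n-1} ε^n/n`. -/
noncomputable def logFn (α : Ordinal.{0}) (f : LSeries α) : LSeries α :=
  (famSum fun β : Idx α => domExp α f β • ell α (β.1 + 1))
    + HahnSeries.C (Real.log (leadCoeff f))
    + log1p (f * (HahnSeries.single (monExp α (domExp α f)) (leadCoeff f))⁻¹ - 1)

/-- The logarithmicity `λ_f`: the least `β` with `r_β ≠ 0`, where `𝔡(f) = ℓ^r`. -/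
noncomputable def lambdaOf (α : Ordinal.{0}) (f : LSeries α) : Ordinal.{0} :=
  sInf {β : Ordinal.{0} | ∃ h : β < α, domExp α f ⟨β, h⟩ ≠ 0}

/-- The coefficient of `ω^δ` in the Cantor normal form of `μ`. -/
noncomputable def cnfCoeff (μ δ : Ordinal.{0}) : ℕ :=
  Cardinal.toNat (Ordinal.card ((μ / Ordinal.omega0 ^ δ) % Ordinal.omega0))

/-- `λ_{g;ν}`: writing `λ_g = ω^{β₁}n₁ + ⋯ + ω^{β_k}n_k` in Cantor normal form,
this is `n_i` if `ν = ω^{β_i+1}`, and `0` for every other ordinal `ν`. -/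
noncomputable def lambdaCoeff (α : Ordinal.{0}) (g : LSeries α) (ν : Ordinal.{0}) : ℕ :=
  if h : ∃ δ : Ordinal.{0}, ν = Ordinal.omega0 ^ (δ + 1) then
    cnfCoeff (lambdaOf α g) h.choose
  else 0

/-- A composition on `𝕃_{<α}` (axioms (CL1)–(CL5)); `C f g` is `f ∘ g`,
subject to conditions only when the right argument is `> ℝ`. -/
def IsCompositionOp (α : Ordinal.{0}) (C : LSeries α → LSeries α → LSeries α) : Prop :=
  -- (CL1): for each g > ℝ, `f ↦ f ∘ g` is an ℝ-algebra homomorphism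
  (∀ g, gtR g →
    C 1 g = 1 ∧
    (∀ f₁ f₂, C (f₁ + f₂) g = C f₁ g + C f₂ g) ∧
    (∀ f₁ f₂, C (f₁ * f₂) g = C f₁ g * C f₂ g) ∧
    (∀ c : ℝ, C (HahnSeries.C c) g = HahnSeries.C c)) ∧
  -- (CL2)
  (∀ f, C f (ell α 0) = f) ∧
  (∀ g, gtR g → C (ell α 0) g = g) ∧
  -- (CL3)
  (∀ f g, gtR g → SPos f → C (logFn α f) g = logFn α (C f g)) ∧
  -- (CL4)
  (∀ g, gtR g → ∀ {ι : Type 1} (F : ι → LSeries α), IsSummable F →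
    IsSummable (fun i => C (F i) g) ∧ C (famSum F) g = famSum fun i => C (F i) g) ∧
  -- (CL5)
  (∀ f g h, gtR g → gtR h → C (C f g) h = C f (C g h))

/-- A composition admits Taylor expansion if for `g > ℝ` and `h ≺ g` the family
`(f⁽ⁿ⁾∘g)·hⁿ/n!` is summable with sum `f∘(g+h)`. -/
def AdmitsTaylor (α : Ordinal.{0}) (D : LSeries α → LSeries α)
    (C : LSeries α → LSeries α → LSeries α) : Prop :=
  ∀ f g h, gtR g → prec h g →
    IsSummable (fun n : ℕ => ((n.factorial : ℝ))⁻¹ • (C (D^[n] f) g * h ^ n)) ∧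
    C f (g + h) = famSum fun n : ℕ => ((n.factorial : ℝ))⁻¹ • (C (D^[n] f) g * h ^ n)

/-- The hyperlogarithm identities for a composition on `𝕃_{<ω^λ}`. -/
def HyperlogIds (lam : Ordinal.{0})
    (C : LSeries (Ordinal.omega0 ^ lam) → LSeries (Ordinal.omega0 ^ lam) →
      LSeries (Ordinal.omega0 ^ lam)) : Prop :=
  (∀ β γ : Ordinal.{0}, β < lam → γ < Ordinal.omega0 ^ (β + 1) →
      C (ell (Ordinal.omega0 ^ lam) γ) (ell (Ordinal.omega0 ^ lam) (Ordinal.omega0 ^ β))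
        = ell (Ordinal.omega0 ^ lam) (Ordinal.omega0 ^ β + γ)) ∧
  (∀ β : Ordinal.{0}, β < lam →
      C (ell (Ordinal.omega0 ^ lam) (Ordinal.omega0 ^ (β + 1)))
          (ell (Ordinal.omega0 ^ lam) (Ordinal.omega0 ^ β))
        = ell (Ordinal.omega0 ^ lam) (Ordinal.omega0 ^ (β + 1)) - 1) ∧
  (∀ β γ : Ordinal.{0}, β < γ → γ < lam → Order.IsSuccLimit γ →
      (C (ell (Ordinal.omega0 ^ lam) (Ordinal.omega0 ^ γ))
          (ell (Ordinal.omega0 ^ lam) (Ordinal.omega0 ^ β))).coeff 0 = 0)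

/-!
Let `τ_t := ℓ₀ + t`. Taylor expansion at `ℓ₀` shows that every coefficient of `f ∘ τ_t` is a
polynomial in `t` whose coefficients are those of `f⁽ⁿ⁾ / n!`; since `τ_t ∘ τ_s = τ_{s+t}`, the
`t`-derivative of this polynomial is the corresponding coefficient of `(f ∘ τ_t)'`.

For `w > 0` the derivative of `log w` is infinitesimal, so the coefficients of
`log (w ∘ τ_t) = (log w) ∘ τ_t` at monomials `⪰ 1`, which record the dominant monomial of `w ∘ τ_t`
and the logarithm of its leading coefficient, do not depend on `t`. Hence
`ℓ^r ∘ τ_t = ℓ^r + (smaller terms)`, so `f ∘ τ_t` and `f` agree at and above `𝔡(f)`, and therefore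
`f⁽ⁿ⁾ ≺ f` for `n ≥ 1`.

Finally `g ∘ τ_t = (g + t g') + k(t)` with `k(t) ≺ g` and all coefficients of `k(t)` divisible by
`t²`. Expanding `(f ∘ g) ∘ τ_t = f ∘ (g ∘ τ_t)` by Taylor at `ℓ₀` on the left and at `g + t g'` on
the right, and comparing the coefficients of `t`, gives `(f ∘ g)' = (f' ∘ g) · g'`.
-/

section SummableFamily

variable {M : Type u} [LinearOrder M] {R : Type v} {ι : Type w}

theorem WellBased.mono {S T : Set M} (h : WellBased T) (hST : S ⊆ T) : WellBased S :=
  fun ⟨f, hf, hm⟩ => h ⟨f, hf, fun n => hST (hm n)⟩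

theorem wellBased_of_isPWO {S : Set Mᵒᵈ} (h : S.IsPWO) :
    WellBased (OrderDual.toDual ⁻¹' S) := by
  rw [Set.isPWO_iff_isWF, Set.isWF_iff_no_descending_seq] at h
  exact fun ⟨f, hf, hmem⟩ => h (fun n => OrderDual.toDual (f n)) (fun _ _ hab => hf hab) hmem

theorem IsSummable.isPWO [Zero R] {f : ι → HahnSeries Mᵒᵈ R} (h : IsSummable f) :
    (⋃ i, (f i).support).IsPWO :=
  wellBased_isPWO h.1

theorem IsSummable.comp_injective {κ : Type*} [Zero R] {f : ι → HahnSeries Mᵒᵈ R}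
    (h : IsSummable f) {e : κ → ι} (he : Function.Injective e) : IsSummable (f ∘ e) :=
  ⟨h.1.mono (Set.preimage_mono (Set.iUnion_subset fun k =>
      Set.subset_iUnion (fun i => (f i).support) (e k))),
    fun u => (h.2 u).preimage he.injOn⟩

theorem famSum_coeff [AddCommMonoid R] {f : ι → HahnSeries Mᵒᵈ R} (h : IsSummable f)
    (u : Mᵒᵈ) : (famSum f).coeff u = ∑ᶠ i, (f i).coeff u := by
  rw [famSum, dif_pos h]
  exact HahnSeries.SummableFamily.coeff_hsum

theorem support_famSum_subset [AddCommMonoid R] (f : ι → HahnSeries Mᵒᵈ R) :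
    (famSum f).support ⊆ ⋃ i, (f i).support := by
  intro u hu
  by_cases h : IsSummable f
  · rw [HahnSeries.mem_support, famSum_coeff h] at hu
    by_contra hnot
    exact hu (finsum_eq_zero_of_forall_eq_zero fun i => by
      simpa using fun h => hnot (Set.mem_iUnion.2 ⟨i, h⟩))
  · simp [famSum, dif_neg h] at hu

theorem isSummable_single_coeff [Zero R] (x : HahnSeries Mᵒᵈ R) :
    IsSummable fun m : Mᵒᵈ => HahnSeries.single m (x.coeff m) := by
  refine ⟨(wellBased_of_isPWO x.isPWO_support).mono (Set.preimage_mono ?_), fun u => ?_⟩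
  · refine Set.iUnion_subset fun m u hu => ?_
    obtain rfl := Set.mem_singleton_iff.1 (HahnSeries.support_single_subset hu)
    simpa using hu
  · refine (Set.finite_singleton u).subset fun m hm => ?_
    by_contra hne
    exact hm (HahnSeries.coeff_single_of_ne (Ne.symm hne))

theorem famSum_single_coeff [AddCommMonoid R] (x : HahnSeries Mᵒᵈ R) :
    famSum (fun m : Mᵒᵈ => HahnSeries.single m (x.coeff m)) = x := by
  ext u
  rw [famSum_coeff (isSummable_single_coeff x), finsum_eq_single _ u
    fun m hm => HahnSeries.coeff_single_of_ne (Ne.symm hm), HahnSeries.coeff_single_same]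

end SummableFamily

section Polynomials

open Polynomial

theorem exists_polynomial_eval_eq_finsum {a : ℕ → ℝ} (ha : (Function.support a).Finite) :
    ∃ p : ℝ[X], (∀ n, p.coeff n = a n) ∧ ∀ t, p.eval t = ∑ᶠ n, a n * t ^ n := by
  refine ⟨∑ n ∈ ha.toFinset, monomial n (a n), fun k => ?_, fun t => ?_⟩
  · simp only [finsetSum_coeff, coeff_monomial, Finset.sum_ite_eq', Set.Finite.mem_toFinset,
      Function.mem_support, ite_not, ite_eq_right_iff]
    exact fun hk => hk.symm
  · rw [eval_finsetSum, finsum_eq_sum_of_support_subset (s := ha.toFinset) _ fun n hn => ?_]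
    · simp [eval_monomial]
    · exact ha.mem_toFinset.2 (left_ne_zero_of_mul hn)

theorem finite_setOf_ne_zero_of_finite_eval {p : ℕ → ℝ[X]}
    (h : ∀ t : ℝ, {m | (p m).eval t ≠ 0}.Finite) : {m | p m ≠ 0}.Finite := by
  have hroots : (⋃ m ∈ {m | p m ≠ 0}, {t : ℝ | (p m).IsRoot t}).Countable :=
    (Set.to_countable _).biUnion fun m hm => (finite_setOfPred_isRoot hm).countable
  obtain ⟨t, ht⟩ : ∃ t, t ∉ ⋃ m ∈ {m | p m ≠ 0}, {t : ℝ | (p m).IsRoot t} := by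
    by_contra! hall
    exact Cardinal.not_countable_real (hroots.mono fun t _ => hall t)
  refine (h t).subset fun m hm hroot => ht ?_
  exact Set.mem_biUnion hm hroot

theorem exists_poly_eval_eq_finsum_coeff_one {p : ℕ → ℝ[X]} (hdvd : ∀ m, X ^ (2 * m) ∣ p m)
    (hfin : ∀ t : ℝ, {m | (p m).eval t ≠ 0}.Finite) :
    ∃ P : ℝ[X], (∀ t, P.eval t = ∑ᶠ m, (p m).eval t) ∧ P.coeff 1 = (p 0).coeff 1 := by
  set S := (finite_setOf_ne_zero_of_finite_eval hfin).toFinset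
  refine ⟨∑ m ∈ S, p m, fun t => ?_, ?_⟩
  · rw [eval_finsetSum, finsum_eq_sum_of_support_subset _ fun m hm => ?_]
    exact (Set.Finite.mem_toFinset _).2 fun h0 => hm (by simp [h0])
  rw [finsetSum_coeff, Finset.sum_eq_single 0 (fun m _ hm => ?_) (fun h0 => by simp_all [S])]
  exact X_pow_dvd_iff.1 ((pow_dvd_pow X (by omega : 2 ≤ 2 * m)).trans (hdvd m)) 1 (by omega)

end Polynomials

section Order

variable {M : Type u} [AddCommGroup M] [LinearOrder M]

theorem leadCoeff_eq_leadingCoeff {k : Type v} [Zero k] (f : HahnSeries Mᵒᵈ k) :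
    leadCoeff f = f.leadingCoeff := by
  by_cases hf : f = 0
  · simp [leadCoeff, hf]
  · rw [leadCoeff, dif_neg hf, HahnSeries.leadingCoeff_eq, HahnSeries.order_of_ne hf]

theorem sPos_iff {f : HahnSeries Mᵒᵈ ℝ} : SPos f ↔ 0 < f.leadingCoeff := by
  rw [SPos, leadCoeff_eq_leadingCoeff]

theorem SPos.ne_zero {f : HahnSeries Mᵒᵈ ℝ} (h : SPos f) : f ≠ 0 :=
  HahnSeries.leadingCoeff_ne_zero.1 (sPos_iff.1 h).ne'

theorem prec_iff {f g : HahnSeries Mᵒᵈ ℝ} (hg : g ≠ 0) :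
    prec f g ↔ ∀ u ∈ f.support, g.order < u :=
  ⟨fun ⟨_, h⟩ u hu => by
      obtain ⟨n, hn, hlt⟩ := h u hu
      exact (HahnSeries.order_le_of_coeff_ne_zero hn).trans_lt hlt,
    fun h => ⟨hg, fun u hu => ⟨g.order, HahnSeries.coeff_order_eq_zero.not.2 hg, h u hu⟩⟩⟩

theorem prec.order_lt {f g : HahnSeries Mᵒᵈ ℝ} (h : prec f g) {u : Mᵒᵈ} (hu : f.coeff u ≠ 0) :
    g.order < u :=
  (prec_iff h.1).1 h u hu

theorem prec.smul {f g : HahnSeries Mᵒᵈ ℝ} (h : prec f g) (c : ℝ) : prec (c • f) g :=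
  (prec_iff h.1).2 fun _ hu => h.order_lt (HahnSeries.support_smul_subset c f hu)

theorem order_add_of_prec {g f : HahnSeries Mᵒᵈ ℝ} (h : prec f g) :
    (g + f).order = g.order ∧ (g + f).leadingCoeff = g.leadingCoeff := by
  rcases eq_or_ne f 0 with rfl | hf
  · simp
  have hlt : g.orderTop < f.orderTop := by
    rw [← HahnSeries.order_eq_orderTop_of_ne_zero h.1, ← HahnSeries.order_eq_orderTop_of_ne_zero hf]
    exact WithTop.coe_lt_coe.2 (h.order_lt (HahnSeries.coeff_order_eq_zero.not.2 hf))
  have htop := HahnSeries.orderTop_add_eq_left hlt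
  have hgf : g + f ≠ 0 := fun h0 => by
    rw [h0, HahnSeries.orderTop_zero] at htop
    exact h.1 (HahnSeries.orderTop_eq_top.1 htop.symm)
  refine ⟨WithTop.coe_injective ?_, HahnSeries.leadingCoeff_add_eq_left hlt⟩
  rw [HahnSeries.order_eq_orderTop_of_ne_zero hgf, HahnSeries.order_eq_orderTop_of_ne_zero h.1,
    htop]

/-- `x ≺ 1`: the infinitesimal monomials are the positive elements of the dual order. -/
def IsInfinitesimal (x : HahnSeries Mᵒᵈ ℝ) : Prop := ∀ u ∈ x.support, (0 : Mᵒᵈ) < u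

namespace IsInfinitesimal

variable {x y : HahnSeries Mᵒᵈ ℝ}

theorem coeff_eq_zero (hx : IsInfinitesimal x) {u : Mᵒᵈ} (hu : ¬(0 : Mᵒᵈ) < u) :
    x.coeff u = 0 :=
  by_contra fun h => hu (hx u h)

theorem add (hx : IsInfinitesimal x) (hy : IsInfinitesimal y) : IsInfinitesimal (x + y) :=
  fun u hu => (HahnSeries.support_add_subset x y hu).elim (hx u) (hy u)

theorem smul (hx : IsInfinitesimal x) (c : ℝ) : IsInfinitesimal (c • x) := fun u hu =>
  hx u (HahnSeries.support_smul_subset c x hu)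

theorem famSum {ι : Type w} {f : ι → HahnSeries Mᵒᵈ ℝ} (h : ∀ i, IsInfinitesimal (f i)) :
    IsInfinitesimal (LogHyp.famSum f) := fun u hu => by
  obtain ⟨i, hi⟩ := Set.mem_iUnion.1 (support_famSum_subset f hu)
  exact h i u hi

theorem orderTop_pos (hx : IsInfinitesimal x) : 0 < x.orderTop := by
  by_cases h0 : x = 0
  · simp [h0]
  · rw [← HahnSeries.order_eq_orderTop_of_ne_zero h0]
    exact WithTop.coe_lt_coe.2 (hx _ (HahnSeries.coeff_order_eq_zero.not.2 h0))

variable [IsOrderedAddMonoid M]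

theorem mul (hx : IsInfinitesimal x) (hy : IsInfinitesimal y) : IsInfinitesimal (x * y) := by
  intro u hu
  obtain ⟨a, ha, b, hb, rfl⟩ := HahnSeries.support_mul_subset hu
  exact add_pos (hx a ha) (hy b hb)

theorem pow_succ (hx : IsInfinitesimal x) (n : ℕ) : IsInfinitesimal (x ^ (n + 1)) := by
  induction n with
  | zero => simpa using hx
  | succ n ih => rw [_root_.pow_succ]; exact ih.mul hx

theorem isSummable_pow (hx : IsInfinitesimal x) : IsSummable fun n : ℕ => x ^ n :=
  ⟨wellBased_of_isPWO (HahnSeries.SummableFamily.isPWO_iUnion_support_powers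
      (HahnSeries.zero_le_orderTop_iff.1 hx.orderTop_pos.le)),
    HahnSeries.SummableFamily.pow_finite_co_support hx.orderTop_pos⟩

end IsInfinitesimal

variable [IsOrderedAddMonoid M]

theorem isInfinitesimal_of_isSummable_pow {y : HahnSeries Mᵒᵈ ℝ}
    (h : IsSummable fun n : ℕ => y ^ n) : IsInfinitesimal y := by
  rcases eq_or_ne y 0 with rfl | hy
  · intro u hu
    simp at hu
  have hmem : ∀ n : ℕ, n • y.order ∈ (y ^ n).support := fun n => by
    rw [← HahnSeries.order_pow]
    exact HahnSeries.coeff_order_eq_zero.not.2 (pow_ne_zero n hy)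
  intro u hu
  refine lt_of_lt_of_le ?_ (HahnSeries.order_le_of_coeff_ne_zero hu)
  by_contra! hle
  rcases hle.lt_or_eq with hneg | hzero
  · exact h.1 ⟨fun n => n • OrderDual.ofDual y.order, nsmul_left_strictMono hneg,
      fun n => Set.mem_iUnion.2 ⟨n, hmem n⟩⟩
  · exact Set.infinite_of_injective_forall_mem (f := id) Function.injective_id
      (fun n => by simpa [hzero] using hmem n) (h.2 0)

theorem isInfinitesimal_log1p {e : HahnSeries Mᵒᵈ ℝ} (he : IsInfinitesimal e) :
    IsInfinitesimal (log1p e) :=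
  IsInfinitesimal.famSum fun n => (he.pow_succ n).smul _

theorem gtR.sPos {g : HahnSeries Mᵒᵈ ℝ} (h : gtR g) : SPos g := by
  simpa [SLt] using h 0

theorem gtR.ne_zero {g : HahnSeries Mᵒᵈ ℝ} (h : gtR g) : g ≠ 0 :=
  h.sPos.ne_zero

theorem gtR.order_neg {g : HahnSeries Mᵒᵈ ℝ} (h : gtR g) : g.order < 0 := by
  by_contra! hc
  set z := g - HahnSeries.C (g.coeff 0 + 1)
  have hz0 : z.coeff 0 = -1 := by simp [z]
  have hzlow : ∀ u < 0, z.coeff u = 0 := fun u hu => by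
    simp [z, HahnSeries.coeff_eq_zero_of_lt_order (hu.trans_le hc), hu.ne]
  have hzne : z ≠ 0 := HahnSeries.ne_zero_of_coeff_ne_zero (by rw [hz0]; norm_num)
  have hzord : z.order = 0 := le_antisymm
    (HahnSeries.order_le_of_coeff_ne_zero (by rw [hz0]; norm_num))
    ((HahnSeries.le_order_iff_forall hzne).2 hzlow)
  have hpos := sPos_iff.1 (h (g.coeff 0 + 1))
  rw [HahnSeries.leadingCoeff_eq, hzord, hz0] at hpos
  norm_num at hpos

theorem prec_C_of_gtR {g : HahnSeries Mᵒᵈ ℝ} (h : gtR g) (c : ℝ) : prec (HahnSeries.C c) g :=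
  (prec_iff h.ne_zero).2 fun u hu => by
    rw [HahnSeries.C_apply] at hu
    rw [Set.mem_singleton_iff.1 (HahnSeries.support_single_subset hu)]
    exact h.order_neg

theorem gtR_add_of_prec {g f : HahnSeries Mᵒᵈ ℝ} (hg : gtR g) (hf : prec f g) : gtR (g + f) := by
  intro r
  have hord : (g - HahnSeries.C r).order = g.order := by
    simpa [← sub_eq_add_neg] using (order_add_of_prec (prec_C_of_gtR hg (-r))).1
  have hsub : prec f (g - HahnSeries.C r) :=
    (prec_iff (hg r).ne_zero).2 fun u hu => hord ▸ hf.order_lt hu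
  rw [SLt, sPos_iff, add_sub_right_comm, (order_add_of_prec hsub).2]
  exact sPos_iff.1 (hg r)

end Order

section Monomials

variable {α : Ordinal.{0}}

theorem add_one_lt_of_isSuccLimit (hα : Order.IsSuccLimit α) {δ : Ordinal.{0}} (hδ : δ < α) :
    δ + 1 < α := by
  rw [← Order.succ_eq_add_one]
  exact hα.succ_lt hδ

theorem monS_add (r s : Idx α → ℝ) : monS α (r + s) = monS α r * monS α s := by
  rw [monS, monS, monS, HahnSeries.single_mul_single, mul_one]
  rfl

theorem monS_ne_zero (r : Idx α → ℝ) : monS α r ≠ 0 :=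
  HahnSeries.single_ne_zero one_ne_zero

theorem sPos_monS (r : Idx α → ℝ) : SPos (monS α r) := by
  rw [sPos_iff, monS, HahnSeries.leadingCoeff_of_single]
  exact one_pos

theorem monExp_ellExp_lt_monExp_ellExp {β γ : Ordinal.{0}} (hβγ : β < γ) (hγ : γ < α) :
    monExp α (ellExp α β) < monExp α (ellExp α γ) := by
  show toLex (ellExp α γ) < toLex (ellExp α β)
  refine ⟨⟨β, hβγ.trans hγ⟩, fun j (hj : j.1 < β) => ?_, ?_⟩
  · simp [ellExp, hj.ne, (hj.trans hβγ).ne]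
  · simp [ellExp, hβγ.ne]

theorem monExp_ellExp_neg {β : Ordinal.{0}} (hβ : β < α) : monExp α (ellExp α β) < 0 := by
  show toLex 0 < toLex (ellExp α β)
  refine ⟨⟨β, hβ⟩, fun j (hj : j.1 < β) => ?_, ?_⟩
  · simp [ellExp, hj.ne]
  · simp [ellExp]

theorem monExp_derExp_pos (h0 : 0 < α) {β : Ordinal.{0}} (hβ : 0 < β) :
    0 < monExp α (derExp α β) := by
  show toLex (derExp α β) < toLex 0
  exact ⟨⟨0, h0⟩, fun j (hj : j.1 < 0) => by simp at hj, by simp [derExp, hβ]⟩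

theorem coeff_smul_ell_of_ne (c : ℝ) {β : Ordinal.{0}} {u : (Mon α)ᵒᵈ}
    (hu : u ≠ monExp α (ellExp α β)) : (c • ell α β).coeff u = 0 := by
  rw [HahnSeries.coeff_smul, ell, monS, HahnSeries.coeff_single_of_ne hu, smul_zero]

theorem strictMono_monExp_ellExp_succ (hα : Order.IsSuccLimit α) :
    StrictMono fun β : Idx α => monExp α (ellExp α (β.1 + 1)) := fun β γ hβγ => by
  refine monExp_ellExp_lt_monExp_ellExp ?_ (add_one_lt_of_isSuccLimit hα γ.2)
  rw [← Order.succ_eq_add_one, ← Order.succ_eq_add_one]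
  exact Order.succ_lt_succ hβγ

end Monomials

section Logarithm

variable {α : Ordinal.{0}}

noncomputable def logMon (α : Ordinal.{0}) (r : Idx α → ℝ) : LSeries α :=
  famSum fun β : Idx α => r β • ell α (β.1 + 1)

theorem isSummable_logMon (hα : Order.IsSuccLimit α) (r : Idx α → ℝ) :
    IsSummable fun β : Idx α => r β • ell α (β.1 + 1) := by
  have hmono := strictMono_monExp_ellExp_succ hα
  have hsupp : ∀ β : Idx α, (r β • ell α (β.1 + 1)).support ⊆ {monExp α (ellExp α (β.1 + 1))} :=
    fun β u hu => by_contra fun hne => hu (coeff_smul_ell_of_ne _ hne)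
  refine ⟨wellBased_of_isPWO ?_, fun u => ?_⟩
  · have hrange : (Set.range fun β : Idx α => monExp α (ellExp α (β.1 + 1))).IsPWO := by
      rw [← Set.image_univ]
      exact (Set.isWF_univ_iff.2 inferInstance).isPWO.image_of_monotone hmono.monotone
    exact hrange.mono (Set.iUnion_subset fun β =>
      (hsupp β).trans (Set.singleton_subset_iff.2 ⟨β, rfl⟩))
  · refine Set.Subsingleton.finite fun β hβ γ hγ => hmono.injective ?_
    exact (hsupp β hβ).symm.trans (hsupp γ hγ)

theorem coeff_logMon_monExp_ellExp_succ (hα : Order.IsSuccLimit α) (r : Idx α → ℝ) (γ : Idx α) :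
    (logMon α r).coeff (monExp α (ellExp α (γ.1 + 1))) = r γ := by
  rw [logMon, famSum_coeff (isSummable_logMon hα r), finsum_eq_single _ γ fun β hβ =>
    coeff_smul_ell_of_ne _ fun h => hβ ((strictMono_monExp_ellExp_succ hα).injective h.symm)]
  simp [ell, monS]

theorem coeff_logMon_zero (hα : Order.IsSuccLimit α) (r : Idx α → ℝ) :
    (logMon α r).coeff 0 = 0 := by
  rw [logMon, famSum_coeff (isSummable_logMon hα r)]
  exact finsum_eq_zero_of_forall_eq_zero fun β =>
    coeff_smul_ell_of_ne _ (monExp_ellExp_neg (add_one_lt_of_isSuccLimit hα β.2)).ne'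

theorem monExp_domExp {f : LSeries α} (hf : f ≠ 0) : monExp α (domExp α f) = f.order := by
  rw [domExp, dif_neg hf, HahnSeries.order_of_ne hf]
  rfl

theorem isInfinitesimal_logFn_eps {f : LSeries α} (hf : f ≠ 0) :
    IsInfinitesimal (f * (HahnSeries.single (monExp α (domExp α f)) (leadCoeff f))⁻¹ - 1) := by
  rw [monExp_domExp hf, leadCoeff_eq_leadingCoeff, HahnSeries.inv_single]
  intro u hu
  by_contra hle
  refine hu ?_
  have hshift := HahnSeries.coeff_mul_single_add (x := f) (r := f.leadingCoeff⁻¹)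
    (a := u + f.order) (b := -f.order)
  rw [add_neg_cancel_right] at hshift
  rw [HahnSeries.coeff_sub, hshift, HahnSeries.coeff_one]
  rcases (not_lt.1 hle).lt_or_eq with hneg | rfl
  · rw [HahnSeries.coeff_eq_zero_of_lt_order (by simpa using add_lt_add_right hneg f.order),
      if_neg hneg.ne, zero_mul, sub_zero]
  · rw [zero_add, ← HahnSeries.leadingCoeff_eq,
      mul_inv_cancel₀ (HahnSeries.leadingCoeff_ne_zero.2 hf), if_pos rfl, sub_self]

theorem coeff_logFn_monExp_ellExp_succ (hα : Order.IsSuccLimit α) {f : LSeries α} (hf : f ≠ 0)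
    (γ : Idx α) : (logFn α f).coeff (monExp α (ellExp α (γ.1 + 1))) = domExp α f γ := by
  have hneg := monExp_ellExp_neg (add_one_lt_of_isSuccLimit hα γ.2)
  rw [logFn, HahnSeries.coeff_add, HahnSeries.coeff_add, ← logMon,
    coeff_logMon_monExp_ellExp_succ hα, HahnSeries.C_apply,
    HahnSeries.coeff_single_of_ne hneg.ne,
    (isInfinitesimal_log1p (isInfinitesimal_logFn_eps hf)).coeff_eq_zero hneg.not_gt,
    add_zero, add_zero]

theorem coeff_logFn_zero (hα : Order.IsSuccLimit α) {f : LSeries α} (hf : f ≠ 0) :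
    (logFn α f).coeff 0 = Real.log (leadCoeff f) := by
  rw [logFn, HahnSeries.coeff_add, HahnSeries.coeff_add, ← logMon, coeff_logMon_zero hα,
    HahnSeries.C_apply, HahnSeries.coeff_single_same,
    (isInfinitesimal_log1p (isInfinitesimal_logFn_eps hf)).coeff_eq_zero (lt_irrefl 0),
    zero_add, add_zero]

end Logarithm

namespace IsCompositionOp

variable {α : Ordinal.{0}} {C : LSeries α → LSeries α → LSeries α} {g : LSeries α}

theorem comp_one (hC : IsCompositionOp α C) (hg : gtR g) : C 1 g = 1 :=
  (hC.1 g hg).1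

theorem comp_add (hC : IsCompositionOp α C) (hg : gtR g) (x y : LSeries α) :
    C (x + y) g = C x g + C y g :=
  (hC.1 g hg).2.1 x y

theorem comp_mul (hC : IsCompositionOp α C) (hg : gtR g) (x y : LSeries α) :
    C (x * y) g = C x g * C y g :=
  (hC.1 g hg).2.2.1 x y

theorem comp_C (hC : IsCompositionOp α C) (hg : gtR g) (c : ℝ) :
    C (HahnSeries.C c) g = HahnSeries.C c :=
  (hC.1 g hg).2.2.2 c

theorem comp_ell_zero (hC : IsCompositionOp α C) (f : LSeries α) : C f (ell α 0) = f :=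
  hC.2.1 f

theorem ell_zero_comp (hC : IsCompositionOp α C) (hg : gtR g) : C (ell α 0) g = g :=
  hC.2.2.1 g hg

theorem comp_logFn (hC : IsCompositionOp α C) (hg : gtR g) {f : LSeries α} (hf : SPos f) :
    C (logFn α f) g = logFn α (C f g) :=
  hC.2.2.2.1 f g hg hf

theorem isSummable_comp (hC : IsCompositionOp α C) (hg : gtR g) {ι : Type 1}
    {F : ι → LSeries α} (hF : IsSummable F) : IsSummable fun i => C (F i) g :=
  (hC.2.2.2.2.1 g hg F hF).1

theorem comp_famSum (hC : IsCompositionOp α C) (hg : gtR g) {ι : Type 1}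
    {F : ι → LSeries α} (hF : IsSummable F) : C (famSum F) g = famSum fun i => C (F i) g :=
  (hC.2.2.2.2.1 g hg F hF).2

theorem comp_comp (hC : IsCompositionOp α C) {h : LSeries α} (hg : gtR g) (hh : gtR h)
    (f : LSeries α) : C (C f g) h = C f (C g h) :=
  hC.2.2.2.2.2 f g h hg hh

theorem comp_smul (hC : IsCompositionOp α C) (hg : gtR g) (c : ℝ) (x : LSeries α) :
    C (c • x) g = c • C x g := by
  rw [← HahnSeries.C_mul_eq_smul, hC.comp_mul hg, hC.comp_C hg, HahnSeries.C_mul_eq_smul]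

theorem comp_pow (hC : IsCompositionOp α C) (hg : gtR g) (x : LSeries α) (n : ℕ) :
    C (x ^ n) g = C x g ^ n := by
  induction n with
  | zero => simpa using hC.comp_one hg
  | succ n ih => rw [pow_succ, pow_succ, hC.comp_mul hg, ih]

theorem comp_ne_zero (hC : IsCompositionOp α C) (hg : gtR g) {x : LSeries α} (hx : x ≠ 0) :
    C x g ≠ 0 := fun h0 => by
  simpa [h0, ← hC.comp_mul hg, mul_inv_cancel₀ hx, hC.comp_one hg] using hC.comp_mul hg x x⁻¹

theorem isInfinitesimal_comp (hC : IsCompositionOp α C) (hg : gtR g) {x : LSeries α}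
    (hx : IsInfinitesimal x) : IsInfinitesimal (C x g) := by
  have hpow := hC.isSummable_comp hg (hx.isSummable_pow.comp_injective ULift.down_injective)
  refine isInfinitesimal_of_isSummable_pow ?_
  simpa [Function.comp_def, hC.comp_pow hg] using hpow.comp_injective ULift.up_injective

end IsCompositionOp

namespace IsDerL

variable {α : Ordinal.{0}} {D : LSeries α → LSeries α}

theorem map_add (hD : IsDerL α D) (x y : LSeries α) : D (x + y) = D x + D y :=
  hD.1.2.1 x y

theorem map_C (hD : IsDerL α D) (c : ℝ) : D (HahnSeries.C c) = 0 := by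
  have h1 : D 1 = 0 := by simpa using hD.2.1 1 1
  rw [← mul_one (HahnSeries.C c), HahnSeries.C_mul_eq_smul, hD.1.1, h1, smul_zero]

theorem isInfinitesimal_logMon (hD : IsDerL α D) (hα : Order.IsSuccLimit α) (r : Idx α → ℝ) :
    IsInfinitesimal (D (logMon α r)) := by
  rw [logMon, (hD.1.2.2 _ (isSummable_logMon hα r)).2]
  refine IsInfinitesimal.famSum fun β => ?_
  rw [hD.1.1, hD.2.2 _ (add_one_lt_of_isSuccLimit hα β.2)]
  refine IsInfinitesimal.smul (fun u hu => ?_) _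
  rw [Set.mem_singleton_iff.1 (HahnSeries.support_single_subset hu)]
  exact monExp_derExp_pos hα.pos (by simp [← Order.succ_eq_add_one])

end IsDerL

section Translation

open Polynomial

variable {α : Ordinal.{0}} {D : LSeries α → LSeries α} {C : LSeries α → LSeries α → LSeries α}

noncomputable def tau (α : Ordinal.{0}) (t : ℝ) : LSeries α := ell α 0 + HahnSeries.C t

theorem gtR_ell_zero (h0 : 0 < α) : gtR (ell α 0) := by
  intro r
  have hord : (ell α 0).order = monExp α (ellExp α 0) := HahnSeries.order_single one_ne_zero
  have hprec : prec (HahnSeries.C (-r)) (ell α 0) := (prec_iff (monS_ne_zero _)).2 fun u hu => by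
    rw [HahnSeries.C_apply] at hu
    rw [Set.mem_singleton_iff.1 (HahnSeries.support_single_subset hu)]
    exact hord.trans_lt (monExp_ellExp_neg h0)
  rw [SLt, sPos_iff, sub_eq_add_neg, ← map_neg, (order_add_of_prec hprec).2, ell, monS,
    HahnSeries.leadingCoeff_of_single]
  exact one_pos

theorem prec_one_ell_zero (h0 : 0 < α) : prec 1 (ell α 0) := by
  simpa using prec_C_of_gtR (gtR_ell_zero h0) 1

theorem gtR_tau (h0 : 0 < α) (t : ℝ) : gtR (tau α t) :=
  gtR_add_of_prec (gtR_ell_zero h0) (prec_C_of_gtR (gtR_ell_zero h0) t)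

theorem IsCompositionOp.comp_tau_zero (hC : IsCompositionOp α C) (f : LSeries α) :
    C f (tau α 0) = f := by
  rw [tau, map_zero, add_zero, hC.comp_ell_zero]

theorem IsCompositionOp.tau_comp_tau (hC : IsCompositionOp α C) (h0 : 0 < α) (s t : ℝ) :
    C (tau α t) (tau α s) = tau α (s + t) := by
  rw [tau, hC.comp_add (gtR_tau h0 s), hC.ell_zero_comp (gtR_tau h0 s), hC.comp_C (gtR_tau h0 s)]
  simp only [tau, add_assoc, ← map_add]

theorem AdmitsTaylor.exists_poly_coeff_comp_add_smul (hT : AdmitsTaylor α D C) (f : LSeries α)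
    {g y : LSeries α} (hg : gtR g) (hy : prec y g) (u : (Mon α)ᵒᵈ) :
    ∃ p : ℝ[X], (∀ n, p.coeff n = (C (D^[n] f) g * y ^ n).coeff u / n.factorial) ∧
      ∀ t : ℝ, (C f (g + t • y)).coeff u = p.eval t := by
  set a := fun n : ℕ => (C (D^[n] f) g * y ^ n).coeff u / n.factorial
  have hterm : ∀ (t : ℝ) (n : ℕ),
      ((n.factorial : ℝ)⁻¹ • (C (D^[n] f) g * (t • y) ^ n)).coeff u = a n * t ^ n := by
    intro t n
    have hpow : C (D^[n] f) g * (t • y) ^ n = t ^ n • (C (D^[n] f) g * y ^ n) := by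
      rw [← HahnSeries.C_mul_eq_smul, ← HahnSeries.C_mul_eq_smul, mul_pow, ← map_pow,
        mul_left_comm]
    rw [HahnSeries.coeff_smul, hpow, HahnSeries.coeff_smul, smul_eq_mul, smul_eq_mul]
    ring
  have hfin : (Function.support a).Finite := ((hT f g (1 • y) hg (hy.smul 1)).1.2 u).subset
    fun n hn => by rwa [Set.mem_ofPred_eq, hterm 1 n, one_pow, mul_one]
  obtain ⟨p, hpc, hpe⟩ := exists_polynomial_eval_eq_finsum hfin
  refine ⟨p, hpc, fun t => ?_⟩
  obtain ⟨hsum, heq⟩ := hT f g (t • y) hg (hy.smul t)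
  rw [heq, famSum_coeff hsum, hpe]
  exact finsum_congr (hterm t)

theorem exists_poly_coeff_comp_tau (hC : IsCompositionOp α C) (hT : AdmitsTaylor α D C)
    (h0 : 0 < α) (f : LSeries α) (u : (Mon α)ᵒᵈ) :
    ∃ p : ℝ[X], (∀ n, p.coeff n = (D^[n] f).coeff u / n.factorial) ∧
      ∀ t : ℝ, (C f (tau α t)).coeff u = p.eval t := by
  obtain ⟨p, hpc, hpe⟩ :=
    hT.exists_poly_coeff_comp_add_smul f (gtR_ell_zero h0) (prec_one_ell_zero h0) u
  refine ⟨p, fun n => by rw [hpc, one_pow, mul_one, hC.comp_ell_zero], fun t => ?_⟩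
  rw [tau, ← mul_one (HahnSeries.C t), HahnSeries.C_mul_eq_smul, hpe]

theorem coeff_iterate_eq_of_coeff_comp_tau (hC : IsCompositionOp α C) (hT : AdmitsTaylor α D C)
    (h0 : 0 < α) {f : LSeries α} {u : (Mon α)ᵒᵈ} {p : ℝ[X]}
    (hp : ∀ t : ℝ, (C f (tau α t)).coeff u = p.eval t) (n : ℕ) :
    (D^[n] f).coeff u / n.factorial = p.coeff n := by
  obtain ⟨q, hqc, hqe⟩ := exists_poly_coeff_comp_tau hC hT h0 f u
  rw [← hqc, Polynomial.funext fun t => (hqe t).symm.trans (hp t)]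

theorem eval_derivative_of_coeff_comp_tau (hC : IsCompositionOp α C) (hT : AdmitsTaylor α D C)
    (h0 : 0 < α) {F : LSeries α} {u : (Mon α)ᵒᵈ} {p : ℝ[X]}
    (hp : ∀ t : ℝ, (C F (tau α t)).coeff u = p.eval t) (t : ℝ) :
    p.derivative.eval t = (D (C F (tau α t))).coeff u := by
  have hshift : ∀ s : ℝ, (C (C F (tau α t)) (tau α s)).coeff u = (taylor t p).eval s := fun s => by
    rw [hC.comp_comp (gtR_tau h0 t) (gtR_tau h0 s), hC.tau_comp_tau h0, hp, taylor_eval]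
  rw [← taylor_coeff_one, ← coeff_iterate_eq_of_coeff_comp_tau hC hT h0 hshift 1]
  simp

theorem coeff_comp_tau_eq_of_coeff_D_eq_zero (hC : IsCompositionOp α C)
    (hT : AdmitsTaylor α D C) (h0 : 0 < α) {F : LSeries α} {u : (Mon α)ᵒᵈ}
    (hDF : ∀ t : ℝ, (D (C F (tau α t))).coeff u = 0) (t : ℝ) :
    (C F (tau α t)).coeff u = F.coeff u := by
  obtain ⟨p, -, hp⟩ := exists_poly_coeff_comp_tau hC hT h0 F u
  have hder : derivative p = 0 := Polynomial.funext fun s => by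
    rw [eval_derivative_of_coeff_comp_tau hC hT h0 hp, hDF, eval_zero]
  have hconst := eq_C_of_natDegree_eq_zero (derivative_eq_zero.1 hder)
  have hF := hp 0
  rw [hC.comp_tau_zero] at hF
  rw [hp, hF, hconst, eval_C, eval_C]

theorem isInfinitesimal_iterate_D (hC : IsCompositionOp α C) (hT : AdmitsTaylor α D C)
    (h0 : 0 < α) {x : LSeries α} (hx : IsInfinitesimal x) (n : ℕ) :
    IsInfinitesimal (D^[n] x) := by
  intro u hu
  by_contra hnonpos
  have hzero : ∀ t : ℝ, (C x (tau α t)).coeff u = (0 : ℝ[X]).eval t := fun t => by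
    rw [eval_zero, (hC.isInfinitesimal_comp (gtR_tau h0 t) hx).coeff_eq_zero hnonpos]
  have := coeff_iterate_eq_of_coeff_comp_tau hC hT h0 hzero n
  rw [coeff_zero, div_eq_zero_iff] at this
  exact this.elim hu (Nat.cast_ne_zero.2 (Nat.factorial_ne_zero n))

end Translation

section DominantTerm

variable {α : Ordinal.{0}} {D : LSeries α → LSeries α} {C : LSeries α → LSeries α → LSeries α}

theorem isInfinitesimal_D_logFn (hD : IsDerL α D) (hC : IsCompositionOp α C)
    (hT : AdmitsTaylor α D C) (hα : Order.IsSuccLimit α) {y : LSeries α} (hy : y ≠ 0) :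
    IsInfinitesimal (D (logFn α y)) := by
  rw [logFn, hD.map_add, hD.map_add, hD.map_C, add_zero, ← logMon]
  refine (hD.isInfinitesimal_logMon hα _).add ?_
  simpa using isInfinitesimal_iterate_D hC hT hα.pos
    (isInfinitesimal_log1p (isInfinitesimal_logFn_eps hy)) 1

theorem coeff_logFn_comp_tau (hD : IsDerL α D) (hC : IsCompositionOp α C)
    (hT : AdmitsTaylor α D C) (hα : Order.IsSuccLimit α) {w : LSeries α} (hw : SPos w)
    {u : (Mon α)ᵒᵈ} (hu : ¬0 < u) (t : ℝ) :
    (logFn α (C w (tau α t))).coeff u = (logFn α w).coeff u := by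
  have hlog : ∀ s, C (logFn α w) (tau α s) = logFn α (C w (tau α s)) := fun s =>
    hC.comp_logFn (gtR_tau hα.pos s) hw
  rw [← hlog]
  refine coeff_comp_tau_eq_of_coeff_D_eq_zero hC hT hα.pos (fun s => ?_) t
  rw [hlog]
  exact (isInfinitesimal_D_logFn hD hC hT hα
    (hC.comp_ne_zero (gtR_tau hα.pos s) hw.ne_zero)).coeff_eq_zero hu

theorem order_comp_tau (hD : IsDerL α D) (hC : IsCompositionOp α C) (hT : AdmitsTaylor α D C)
    (hα : Order.IsSuccLimit α) {w : LSeries α} (hw : SPos w) (t : ℝ) :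
    (C w (tau α t)).order = w.order := by
  have hwt := hC.comp_ne_zero (gtR_tau hα.pos t) hw.ne_zero
  rw [← monExp_domExp hwt, ← monExp_domExp hw.ne_zero]
  congr 1
  funext γ
  rw [← coeff_logFn_monExp_ellExp_succ hα hwt, ← coeff_logFn_monExp_ellExp_succ hα hw.ne_zero,
    coeff_logFn_comp_tau hD hC hT hα hw
      (monExp_ellExp_neg (add_one_lt_of_isSuccLimit hα γ.2)).not_gt]

theorem log_leadingCoeff_comp_tau (hD : IsDerL α D) (hC : IsCompositionOp α C)
    (hT : AdmitsTaylor α D C) (hα : Order.IsSuccLimit α) {w : LSeries α} (hw : SPos w) (t : ℝ) :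
    Real.log (C w (tau α t)).leadingCoeff = Real.log w.leadingCoeff := by
  rw [← leadCoeff_eq_leadingCoeff, ← leadCoeff_eq_leadingCoeff,
    ← coeff_logFn_zero hα (hC.comp_ne_zero (gtR_tau hα.pos t) hw.ne_zero),
    ← coeff_logFn_zero hα hw.ne_zero, coeff_logFn_comp_tau hD hC hT hα hw (lt_irrefl 0)]

/-- The leading coefficient is recovered from its logarithm since it is positive, as
`ℓ^r = ℓ^{r/2} ℓ^{r/2}`. -/
theorem leadingCoeff_comp_tau_monS (hD : IsDerL α D) (hC : IsCompositionOp α C)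
    (hT : AdmitsTaylor α D C) (hα : Order.IsSuccLimit α) (r : Idx α → ℝ) (t : ℝ) :
    (C (monS α r) (tau α t)).leadingCoeff = 1 := by
  have hg := gtR_tau hα.pos t
  have hpos : 0 < (C (monS α r) (tau α t)).leadingCoeff := by
    have hhalf : (fun i => r i / 2) + (fun i => r i / 2) = r := funext fun i => add_halves (r i)
    rw [← hhalf, monS_add, hC.comp_mul hg, HahnSeries.leadingCoeff_mul]
    exact mul_self_pos.2 (HahnSeries.leadingCoeff_ne_zero.2 (hC.comp_ne_zero hg (monS_ne_zero _)))
  refine Real.eq_one_of_pos_of_log_eq_zero hpos ?_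
  rw [log_leadingCoeff_comp_tau hD hC hT hα (sPos_monS r), monS, HahnSeries.leadingCoeff_of_single,
    Real.log_one]

theorem coeff_comp_tau_of_le_order (hD : IsDerL α D) (hC : IsCompositionOp α C)
    (hT : AdmitsTaylor α D C) (hα : Order.IsSuccLimit α) {x : LSeries α} {u : (Mon α)ᵒᵈ}
    (hu : u ≤ x.order) (t : ℝ) : (C x (tau α t)).coeff u = x.coeff u := by
  have hg := gtR_tau hα.pos t
  have hsum := isSummable_single_coeff x
  have hdecomp : C x (tau α t) = famSum fun m => C (HahnSeries.single m (x.coeff m)) (tau α t) := by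
    conv_lhs => rw [← famSum_single_coeff x]
    exact hC.comp_famSum hg hsum
  -- `single m 1` is the monomial `monS α (ofLex (ofDual m))`
  have hmon : ∀ m : (Mon α)ᵒᵈ, (C (HahnSeries.single m 1) (tau α t)).order = m ∧
      (C (HahnSeries.single m 1) (tau α t)).leadingCoeff = 1 := fun m =>
    ⟨(order_comp_tau hD hC hT hα (sPos_monS _) t).trans (HahnSeries.order_single one_ne_zero),
      leadingCoeff_comp_tau_monS hD hC hT hα _ t⟩
  have hterm : ∀ m, (C (HahnSeries.single m (x.coeff m)) (tau α t)).coeff u =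
      x.coeff m * (C (HahnSeries.single m 1) (tau α t)).coeff u := fun m => by
    have hsingle : HahnSeries.single m (x.coeff m) = x.coeff m • HahnSeries.single m (1 : ℝ) := by
      rw [← HahnSeries.C_mul_eq_smul, HahnSeries.C_apply, HahnSeries.single_mul_single, zero_add,
        mul_one]
    rw [hsingle, hC.comp_smul hg, HahnSeries.coeff_smul, smul_eq_mul]
  have hself : (C (HahnSeries.single u 1) (tau α t)).coeff u = 1 := by
    simpa only [HahnSeries.leadingCoeff_eq, (hmon u).1] using (hmon u).2
  rw [hdecomp, famSum_coeff (hC.isSummable_comp hg hsum),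
    finsum_eq_single _ u fun m hm => ?_, hterm, hself, mul_one]
  by_cases hxm : x.coeff m = 0
  · rw [hterm, hxm, zero_mul]
  have hum : u < m :=
    lt_of_le_of_ne (hu.trans (HahnSeries.order_le_of_coeff_ne_zero hxm)) (Ne.symm hm)
  rw [hterm, HahnSeries.coeff_eq_zero_of_lt_order (x := C (HahnSeries.single m 1) (tau α t))
    (by rwa [(hmon m).1]), mul_zero]

theorem coeff_iterate_D_of_le_order (hD : IsDerL α D) (hC : IsCompositionOp α C)
    (hT : AdmitsTaylor α D C) (hα : Order.IsSuccLimit α) (x : LSeries α) {n : ℕ} (hn : n ≠ 0)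
    {u : (Mon α)ᵒᵈ} (hu : u ≤ x.order) : (D^[n] x).coeff u = 0 := by
  have hconst : ∀ t, (C x (tau α t)).coeff u = (Polynomial.C (x.coeff u)).eval t := fun t => by
    rw [Polynomial.eval_C, coeff_comp_tau_of_le_order hD hC hT hα hu]
  have := coeff_iterate_eq_of_coeff_comp_tau hC hT hα.pos hconst n
  rw [Polynomial.coeff_C, if_neg hn, div_eq_zero_iff] at this
  exact this.resolve_right (Nat.cast_ne_zero.2 (Nat.factorial_ne_zero n))

theorem prec_iterate_D (hD : IsDerL α D) (hC : IsCompositionOp α C) (hT : AdmitsTaylor α D C)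
    (hα : Order.IsSuccLimit α) {x : LSeries α} (hx : x ≠ 0) {n : ℕ} (hn : n ≠ 0) :
    prec (D^[n] x) x :=
  (prec_iff hx).2 fun _ hu =>
    lt_of_not_ge fun hle => hu (coeff_iterate_D_of_le_order hD hC hT hα x hn hle)

end DominantTerm

section PolynomialFamily

open Polynomial Pointwise

variable {Γ : Type*} [PartialOrder Γ]

theorem coeff_mul_eq_sum_antidiagonal {Γ : Type*} [AddCommMonoid Γ] [PartialOrder Γ]
    [IsOrderedCancelAddMonoid Γ] {x y : HahnSeries Γ ℝ} {S T : Set Γ} (hS : S.IsPWO)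
    (hT : T.IsPWO) (hxS : x.support ⊆ S) (hyT : y.support ⊆ T) (u : Γ) :
    (x * y).coeff u = ∑ ij ∈ Finset.antidiagonal hS hT u, x.coeff ij.1 * y.coeff ij.2 := by
  rw [HahnSeries.coeff_mul]
  refine Finset.sum_subset (fun ij hij => ?_) (fun ij _ hij => ?_)
  · rw [Finset.mem_antidiagonal] at hij ⊢
    exact ⟨hxS hij.1, hyT hij.2.1, hij.2.2⟩
  · rw [Finset.mem_antidiagonal] at hij
    by_contra hne
    exact hij ⟨left_ne_zero_of_mul hne, right_ne_zero_of_mul hne, by simp_all⟩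

def IsPolyFamily (x : ℝ → HahnSeries Γ ℝ) (d : ℕ) : Prop :=
  ∃ S : Set Γ, S.IsPWO ∧ (∀ t, (x t).support ⊆ S) ∧
    ∀ u, ∃ p : ℝ[X], X ^ d ∣ p ∧ ∀ t, (x t).coeff u = p.eval t

namespace IsPolyFamily

variable {x y : ℝ → HahnSeries Γ ℝ} {d e : ℕ}

theorem exists_poly (hx : IsPolyFamily x d) (u : Γ) :
    ∃ p : ℝ[X], X ^ d ∣ p ∧ ∀ t, (x t).coeff u = p.eval t :=
  hx.choose_spec.2.2 u

theorem smul (hx : IsPolyFamily x d) (c : ℝ) : IsPolyFamily (fun t => c • x t) d := by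
  obtain ⟨S, hS, hxS, hxp⟩ := hx
  refine ⟨S, hS, fun t => (HahnSeries.support_smul_subset c _).trans (hxS t), fun u => ?_⟩
  obtain ⟨p, hpd, hp⟩ := hxp u
  exact ⟨Polynomial.C c * p, hpd.mul_left _, fun t => by simp [hp]⟩

variable [AddCommMonoid Γ]

theorem one : IsPolyFamily (fun _ => (1 : HahnSeries Γ ℝ)) 0 :=
  ⟨_, (1 : HahnSeries Γ ℝ).isPWO_support, fun _ => subset_rfl,
    fun u => ⟨Polynomial.C ((1 : HahnSeries Γ ℝ).coeff u), by simp, fun _ => eval_C.symm⟩⟩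

variable [IsOrderedCancelAddMonoid Γ]

theorem mul (hx : IsPolyFamily x d) (hy : IsPolyFamily y e) :
    IsPolyFamily (fun t => x t * y t) (d + e) := by
  obtain ⟨S, hS, hxS, hxp⟩ := hx
  obtain ⟨T, hT, hyT, hyp⟩ := hy
  choose p hpd hp using hxp
  choose q hqd hq using hyp
  refine ⟨S + T, hS.add hT,
    fun t => HahnSeries.support_mul_subset.trans (Set.add_subset_add (hxS t) (hyT t)),
    fun u => ⟨∑ ij ∈ Finset.antidiagonal hS hT u, p ij.1 * q ij.2, ?_, fun t => ?_⟩⟩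
  · exact Finset.dvd_sum fun ij _ => pow_add (X : ℝ[X]) d e ▸ mul_dvd_mul (hpd ij.1) (hqd ij.2)
  · rw [coeff_mul_eq_sum_antidiagonal hS hT (hxS t) (hyT t), eval_finsetSum]
    simp only [eval_mul, hp, hq]

theorem pow (hx : IsPolyFamily x d) : ∀ m : ℕ, IsPolyFamily (fun t => x t ^ m) (d * m)
  | 0 => by simpa using one
  | m + 1 => by simpa [pow_succ, Nat.mul_succ] using (hx.pow m).mul hx

end IsPolyFamily

end PolynomialFamily

section ChainRule

open Polynomial

variable {α : Ordinal.{0}} {D : LSeries α → LSeries α} {C : LSeries α → LSeries α → LSeries α}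

theorem AdmitsTaylor.isPWO_iUnion_support (hT : AdmitsTaylor α D C) (f : LSeries α)
    {g y : LSeries α} (hg : gtR g) (hy : prec y g) :
    (⋃ n : ℕ, (C (D^[n] f) g * y ^ n).support).IsPWO := by
  have hsum := (hT f g (1 • y) hg (hy.smul 1)).1
  rw [one_smul] at hsum
  refine hsum.isPWO.mono (Set.iUnion_mono fun n u hu => ?_)
  rw [HahnSeries.mem_support, HahnSeries.coeff_smul, smul_eq_mul]
  exact mul_ne_zero (inv_ne_zero (Nat.cast_ne_zero.2 (Nat.factorial_ne_zero n))) hu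

theorem AdmitsTaylor.isPolyFamily_comp_add_smul (hT : AdmitsTaylor α D C) (f : LSeries α)
    {g y : LSeries α} (hg : gtR g) (hy : prec y g) :
    IsPolyFamily (fun t : ℝ => C f (g + t • y)) 0 := by
  refine ⟨_, hT.isPWO_iUnion_support f hg hy, fun t u hu => ?_, fun u => ?_⟩
  · obtain ⟨p, hpc, hp⟩ := hT.exists_poly_coeff_comp_add_smul f hg hy u
    by_contra hnot
    have hp0 : p = 0 := Polynomial.ext fun n => by
      rw [hpc, coeff_zero, div_eq_zero_iff]
      exact Or.inl (by simpa using fun h => hnot (Set.mem_iUnion.2 ⟨n, h⟩))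
    exact hu (by rw [hp, hp0, eval_zero])
  · obtain ⟨p, -, hp⟩ := hT.exists_poly_coeff_comp_add_smul f hg hy u
    exact ⟨p, by simp, hp⟩

theorem exists_poly_coeff_comp_tau_sub (hC : IsCompositionOp α C) (hT : AdmitsTaylor α D C)
    (h0 : 0 < α) (g : LSeries α) (u : (Mon α)ᵒᵈ) :
    ∃ q : ℝ[X], X ^ 2 ∣ q ∧ (∀ n, 2 ≤ n → q.coeff n = (D^[n] g).coeff u / n.factorial) ∧
      ∀ t : ℝ, (C g (tau α t) - g - t • D g).coeff u = q.eval t := by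
  obtain ⟨p, hpc, hp⟩ := exists_poly_coeff_comp_tau hC hT h0 g u
  refine ⟨p - Polynomial.C (p.coeff 0) - Polynomial.C (p.coeff 1) * X, ?_, fun n hn => ?_,
    fun t => ?_⟩
  · refine X_pow_dvd_iff.2 fun d hd => ?_
    interval_cases d <;> simp
  · have hn0 : n ≠ 0 := by omega
    have hn1 : 1 ≠ n := by omega
    simp [coeff_C, coeff_X, hpc, hn0, hn1]
  · simp [hp, hpc, mul_comm t]

theorem support_comp_tau_sub_subset (hC : IsCompositionOp α C) (hT : AdmitsTaylor α D C)
    (h0 : 0 < α) (g : LSeries α) (t : ℝ) :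
    (C g (tau α t) - g - t • D g).support ⊆ ⋃ n : ℕ, (D^[n + 2] g).support := by
  intro u hu
  obtain ⟨q, hqd, hqc, hq⟩ := exists_poly_coeff_comp_tau_sub hC hT h0 g u
  by_contra hnot
  have hq0 : q = 0 := Polynomial.ext fun n => by
    rw [coeff_zero]
    by_cases hn : 2 ≤ n
    · obtain ⟨k, rfl⟩ := Nat.exists_eq_add_of_le' hn
      rw [hqc _ hn, div_eq_zero_iff]
      exact Or.inl (by simpa using fun h => hnot (Set.mem_iUnion.2 ⟨k, h⟩))
    · exact X_pow_dvd_iff.1 hqd n (by omega)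
  exact hu (by rw [hq, hq0, eval_zero])

theorem isPolyFamily_comp_tau_sub (hC : IsCompositionOp α C) (hT : AdmitsTaylor α D C)
    (h0 : 0 < α) (g : LSeries α) :
    IsPolyFamily (fun t : ℝ => C g (tau α t) - g - t • D g) 2 := by
  have hpwo : (⋃ n : ℕ, (D^[n + 2] g).support).IsPWO :=
    (hT.isPWO_iUnion_support g (gtR_ell_zero h0) (prec_one_ell_zero h0)).mono
      (Set.iUnion_subset fun n => Set.subset_iUnion_of_subset (n + 2) (by simp [hC.comp_ell_zero]))
  refine ⟨_, hpwo, support_comp_tau_sub_subset hC hT h0 g, fun u => ?_⟩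
  obtain ⟨q, hqd, -, hq⟩ := exists_poly_coeff_comp_tau_sub hC hT h0 g u
  exact ⟨q, hqd, hq⟩

theorem exists_poly_coeff_comp_comp_tau (hD : IsDerL α D) (hC : IsCompositionOp α C)
    (hT : AdmitsTaylor α D C) (hα : Order.IsSuccLimit α) (f : LSeries α) {g : LSeries α}
    (hg : gtR g) (u : (Mon α)ᵒᵈ) :
    ∃ P : ℝ[X], P.coeff 1 = (C (D f) g * D g).coeff u ∧
      ∀ t, (C f (C g (tau α t))).coeff u = P.eval t := by
  set k := fun t : ℝ => C g (tau α t) - g - t • D g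
  have hDg : prec (D g) g := prec_iterate_D hD hC hT hα hg.ne_zero one_ne_zero
  have hgt : ∀ t : ℝ, gtR (g + t • D g) := fun t => gtR_add_of_prec hg (hDg.smul t)
  have hk : ∀ t : ℝ, prec (k t) (g + t • D g) := fun t =>
    (prec_iff (hgt t).ne_zero).2 fun v hv => by
      rw [(order_add_of_prec (hDg.smul t)).1]
      obtain ⟨n, hn⟩ := Set.mem_iUnion.1 (support_comp_tau_sub_subset hC hT hα.pos g t hv)
      exact (prec_iterate_D hD hC hT hα hg.ne_zero (n + 1).succ_ne_zero).order_lt hn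
  have hterm : ∀ m : ℕ, IsPolyFamily
      (fun t => (m.factorial : ℝ)⁻¹ • (C (D^[m] f) (g + t • D g) * k t ^ m)) (2 * m) :=
    fun m => by
      simpa [mul_comm] using ((hT.isPolyFamily_comp_add_smul (D^[m] f) hg hDg).mul
        ((isPolyFamily_comp_tau_sub hC hT hα.pos g).pow m)).smul _
  choose p hpd hp using fun m => (hterm m).exists_poly u
  have hfin : ∀ t : ℝ, {m | (p m).eval t ≠ 0}.Finite := fun t =>
    ((hT f _ _ (hgt t) (hk t)).1.2 u).subset fun m hm => by rwa [Set.mem_ofPred_eq, hp m t]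
  obtain ⟨P, hP, hP1⟩ := exists_poly_eval_eq_finsum_coeff_one hpd hfin
  obtain ⟨p₀, hp₀c, hp₀⟩ := hT.exists_poly_coeff_comp_add_smul f hg hDg u
  have hp₀ : p 0 = p₀ := Polynomial.funext fun t => by simp [← hp 0 t, ← hp₀ t]
  refine ⟨P, by simp [hP1, hp₀, hp₀c], fun t => ?_⟩
  have hsplit : C g (tau α t) = (g + t • D g) + k t := by simp [k]
  rw [hsplit, (hT f _ _ (hgt t) (hk t)).2, famSum_coeff (hT f _ _ (hgt t) (hk t)).1, hP]
  exact finsum_congr fun m => hp m t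

theorem chain_rule (hD : IsDerL α D) (hC : IsCompositionOp α C) (hT : AdmitsTaylor α D C)
    (hα : Order.IsSuccLimit α) (f : LSeries α) {g : LSeries α} (hg : gtR g) :
    D (C f g) = C (D f) g * D g := by
  ext u
  obtain ⟨P, hP1, hP⟩ := exists_poly_coeff_comp_comp_tau hD hC hT hα f hg u
  have hP' : ∀ t, (C (C f g) (tau α t)).coeff u = P.eval t := fun t => by
    rw [hC.comp_comp hg (gtR_tau hα.pos t), hP]
  simpa [hP1] using coeff_iterate_eq_of_coeff_comp_tau hC hT hα.pos hP' 1

end ChainRule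

theorem statement7_general (lam : Ordinal.{0}) (hlim : Order.IsSuccLimit lam)
    (D : LSeries (Ordinal.omega0 ^ lam) → LSeries (Ordinal.omega0 ^ lam))
    (hD : IsDerL (Ordinal.omega0 ^ lam) D)
    (C : LSeries (Ordinal.omega0 ^ lam) → LSeries (Ordinal.omega0 ^ lam) →
      LSeries (Ordinal.omega0 ^ lam))
    (hC : IsCompositionOp (Ordinal.omega0 ^ lam) C)
    (hT : AdmitsTaylor (Ordinal.omega0 ^ lam) D C) :
    ∀ (f g : LSeries (Ordinal.omega0 ^ lam)), gtR g →
      D (C f g) = C (D f) g * D g :=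
  fun f _ hg =>
    chain_rule hD hC hT (Ordinal.isSuccLimit_opow Ordinal.one_lt_omega0 hlim) f hg

/-- Every composition on `𝕃_{<ω^λ}` that admits Taylor expansion obeys
the Chain Rule: `(f∘g)' = (f'∘g)·g'` for all `f` and all `g > ℝ`. -/
theorem statement7 (lam : Ordinal.{0}) (hinf : Ordinal.omega0 ≤ lam) (hlim : Order.IsSuccLimit lam)
    (D : LSeries (Ordinal.omega0 ^ lam) → LSeries (Ordinal.omega0 ^ lam))
    (hD : IsDerL (Ordinal.omega0 ^ lam) D)
    (C : LSeries (Ordinal.omega0 ^ lam) → LSeries (Ordinal.omega0 ^ lam) →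
      LSeries (Ordinal.omega0 ^ lam))
    (hC : IsCompositionOp (Ordinal.omega0 ^ lam) C)
    (hT : AdmitsTaylor (Ordinal.omega0 ^ lam) D C) :
    ∀ (f g : LSeries (Ordinal.omega0 ^ lam)), gtR g →
      D (C f g) = C (D f) g * D g :=
  statement7_general lam hlim D hD C hC hT

end LogHyp
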